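/- Every tournament T on n vertices, with n ≥ 4, has inversion index i(T) ≤ n − 3. -/

import Mathlib

/-- A tournament on a vertex set `V`: a loopless directed graph such that for all
distinct `x, y` exactly one of `(x,y)`, `(y,x)` is an arc. -/
structure Tournament (V : Type*) where
  rel : V → V → Prop
  irrefl : ∀ x, ¬ rel x x
  total : ∀ x y, x ≠ y → rel x y ∨ rel y x
  asymm : ∀ x y, rel x y → ¬ rel y x

namespace Tournament

variable {V : Type*} {W : Type*}

/-- The tournament obtained from `T` by reversing all arcs both of whose
endpoints lie in `X`. -/
def inv (T : Tournament V) (X : Set V) : Tournament V where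
  rel x y := (x ∈ X ∧ y ∈ X ∧ T.rel y x) ∨ ((x ∉ X ∨ y ∉ X) ∧ T.rel x y)
  irrefl x := by have := T.irrefl x; tauto
  total x y hxy := by
    have := T.total x y hxy
    by_cases hx : x ∈ X <;> by_cases hy : y ∈ X <;> tauto
  asymm x y := by have h1 := T.asymm x y; have h2 := T.asymm y x; tauto

/-- Successive inversions along a finite sequence of subsets (`X_0` first). -/
def invSeq (T : Tournament V) (Xs : List (Set V)) : Tournament V :=
  Xs.foldl Tournament.inv T

/-- A tournament is acyclic (transitive) when its arc relation is transitive,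
i.e. a strict linear order. -/
def IsAcyclic (T : Tournament V) : Prop :=
  ∀ x y z, T.rel x y → T.rel y z → T.rel x z

/-- The inversion index: the least number of subsets to be inverted to reach an
acyclic tournament. -/
noncomputable def index (T : Tournament V) : ℕ :=
  sInf {m | ∃ Xs : List (Set V), Xs.length = m ∧ (T.invSeq Xs).IsAcyclic}

/-- Induced subtournament on a set of vertices. -/
def restrict (T : Tournament V) (A : Set V) : Tournament A where
  rel x y := T.rel x y
  irrefl x := T.irrefl x
  total x y hxy := T.total x y (fun h => hxy (Subtype.ext h))
  asymm x y := T.asymm x y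

/-- `T − x`: the subtournament induced on `V ∖ {x}`. -/
def erase (T : Tournament V) (x : V) : Tournament {y : V // y ≠ x} :=
  T.restrict {y | y ≠ x}

/-- `S` embeds into `T`: `S` is isomorphic to the subtournament of `T` induced on
some subset of the vertices of `T`. -/
def Embeds (S : Tournament V) (T : Tournament W) : Prop :=
  ∃ f : V → W, Function.Injective f ∧ ∀ x y, S.rel x y ↔ T.rel (f x) (f y)

/-- Isomorphism of tournaments. -/
def Iso (S : Tournament V) (T : Tournament W) : Prop :=
  ∃ e : V ≃ W, ∀ x y, S.rel x y ↔ T.rel (e x) (e y)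

/-- The dual tournament, obtained by reversing all arcs. -/
def dual (T : Tournament V) : Tournament V where
  rel x y := T.rel y x
  irrefl x := T.irrefl x
  total x y hxy := (T.total x y hxy).symm
  asymm x y h := T.asymm y x h

/-- `X` is an interval of `T`. -/
def IsInterval (T : Tournament V) (X : Set V) : Prop :=
  ∀ y ∉ X, (∀ x ∈ X, T.rel x y) ∨ (∀ x ∈ X, T.rel y x)

/-- A tournament is indecomposable when all its intervals are trivial. -/
def Indecomposable (T : Tournament V) : Prop :=
  ∀ X : Set V, T.IsInterval X → X = ∅ ∨ X = Set.univ ∨ ∃ x, X = {x}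

end Tournament

/-- The transitive tournament `n̲` on `{0, …, n−1}`, with arcs `(i,j)` for `i < j`. -/
def linear (n : ℕ) : Tournament (Fin n) where
  rel x y := x < y
  irrefl x := lt_irrefl x
  total _ _ h := h.lt_or_gt
  asymm _ _ h := lt_asymm h

/-- `2ℕ_{<k} = {0, 2, …, 2(k−1)}` as a subset of `Fin N`. -/
def evensLT {N : ℕ} (k : ℕ) : Set (Fin N) := {i | (i : ℕ) % 2 = 0 ∧ (i : ℕ) < 2 * k}

/-- `2ℕ_{<k}+1 = {1, 3, …, 2k−1}` as a subset of `Fin N`. -/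
def oddsLT {N : ℕ} (k : ℕ) : Set (Fin N) := {i | (i : ℕ) % 2 = 1 ∧ (i : ℕ) < 2 * k}

/-!
Induct on the number of vertices. Inverting `{x} ∪ N⁻(x)` turns any vertex `x` into a source,
and a source stays a source under inversions of sets avoiding it; a tournament with a source
`x` is acyclic as soon as `T − x` is. Hence one inversion plus the inversions for `T − x`
(lifted to `V`) suffice, so `i(T) ≤ n − 3` follows from the base case `n = 4`, where a single
inversion always suffices; the latter is a finite check over the `2⁶` tournaments on `Fin 4`.
-/

def upperRel (a b c d e f : Bool) : Fin 4 → Fin 4 → Bool :=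
  ![![false, a, b, c], ![!a, false, d, e], ![!b, !d, false, f], ![!c, !e, !f, false]]

def boolInv {α : Type*} (r : α → α → Bool) (X : α → Bool) (i j : α) : Bool :=
  if X i && X j then r j i else r i j

theorem exists_boolInv_upperRel_trans : ∀ a b c d e f : Bool, ∃ X : Fin 4 → Bool,
    ∀ i j k, boolInv (upperRel a b c d e f) X i j → boolInv (upperRel a b c d e f) X j k →
      boolInv (upperRel a b c d e f) X i k := by
  decide

theorem eq_upperRel {r : Fin 4 → Fin 4 → Bool} (hirr : ∀ i, r i i = false)
    (hanti : ∀ i j, i ≠ j → r j i = !r i j) :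
    r = upperRel (r 0 1) (r 0 2) (r 0 3) (r 1 2) (r 1 3) (r 2 3) := by
  funext i j
  fin_cases i <;> fin_cases j <;> first | exact hirr _ | rfl | exact hanti _ _ (by decide)

theorem exists_boolInv_trans {r : Fin 4 → Fin 4 → Bool} (hirr : ∀ i, r i i = false)
    (hanti : ∀ i j, i ≠ j → r j i = !r i j) :
    ∃ X : Fin 4 → Bool, ∀ i j k, boolInv r X i j → boolInv r X j k → boolInv r X i k := by
  rw [eq_upperRel hirr hanti]
  apply exists_boolInv_upperRel_trans

namespace Tournament

variable {V : Type*}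

theorem ext {T S : Tournament V} (h : ∀ x y, T.rel x y ↔ S.rel x y) : T = S := by
  cases T; cases S
  congr
  funext x y
  exact propext (h x y)

theorem rel_iff_not_rel (T : Tournament V) {x y : V} (hxy : x ≠ y) :
    T.rel y x ↔ ¬ T.rel x y :=
  ⟨T.asymm y x, (T.total x y hxy).resolve_left⟩

theorem invSeq_cons (T : Tournament V) (X : Set V) (Xs : List (Set V)) :
    T.invSeq (X :: Xs) = (T.inv X).invSeq Xs := rfl

theorem index_le_length {T : Tournament V} {Xs : List (Set V)}
    (h : (T.invSeq Xs).IsAcyclic) : T.index ≤ Xs.length :=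
  Nat.sInf_le ⟨Xs, rfl, h⟩

theorem exists_inv_isAcyclic_of_card_eq_four [Fintype V] (hV : Fintype.card V = 4)
    (T : Tournament V) : ∃ X : Set V, (T.inv X).IsAcyclic := by
  classical
  let e := Fintype.equivFinOfCardEq hV
  let r : Fin 4 → Fin 4 → Bool := fun i j => decide (T.rel (e.symm i) (e.symm j))
  obtain ⟨X, hX⟩ := exists_boolInv_trans (r := r) (fun i => by simp [r, T.irrefl])
    (fun i j hij => by simp [r, T.rel_iff_not_rel (e.symm.injective.ne hij)])
  have hrel : ∀ a b, (T.inv {v | X (e v)}).rel a b ↔ boolInv r X (e a) (e b) := by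
    intro a b
    cases ha : X (e a) <;> cases hb : X (e b) <;> simp [inv, boolInv, r, ha, hb]
  refine ⟨{v | X (e v)}, fun a b c hab hbc => ?_⟩
  rw [hrel] at *
  exact hX _ _ _ hab hbc

theorem restrict_inv_image (T : Tournament V) (A : Set V) (S : Set A) :
    (T.inv (Subtype.val '' S)).restrict A = (T.restrict A).inv S := by
  apply ext
  intro a b
  simp only [restrict, inv, Subtype.val_injective.mem_set_image]

theorem restrict_invSeq_map_image (T : Tournament V) (A : Set V) (Xs : List (Set A)) :
    (T.invSeq (Xs.map (Subtype.val '' ·))).restrict A = (T.restrict A).invSeq Xs := by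
  induction Xs generalizing T with
  | nil => rfl
  | cons S Xs ih => rw [List.map_cons, invSeq_cons, invSeq_cons, ih, restrict_inv_image]

def IsSource (T : Tournament V) (x : V) : Prop :=
  ∀ v, v ≠ x → T.rel x v

theorem isSource_inv_insert_setOf_rel (T : Tournament V) (x : V) :
    (T.inv (insert x {v | T.rel v x})).IsSource x := by
  intro v hv
  by_cases hvx : T.rel v x
  · exact Or.inl ⟨Set.mem_insert x _, Or.inr hvx, hvx⟩
  · refine Or.inr ⟨Or.inr ?_, (T.rel_iff_not_rel hv).2 hvx⟩
    rintro (rfl | h)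
    exacts [hv rfl, hvx h]

theorem IsSource.inv {T : Tournament V} {x : V} (h : T.IsSource x) {X : Set V} (hx : x ∉ X) :
    (T.inv X).IsSource x :=
  fun v hv => Or.inr ⟨Or.inl hx, h v hv⟩

theorem IsSource.invSeq {T : Tournament V} {x : V} (h : T.IsSource x) {Xs : List (Set V)}
    (hXs : ∀ X ∈ Xs, x ∉ X) : (T.invSeq Xs).IsSource x := by
  induction Xs generalizing T with
  | nil => exact h
  | cons X Xs ih =>
    exact ih (h.inv (hXs X List.mem_cons_self)) fun Y hY => hXs Y (List.mem_cons_of_mem X hY)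

theorem IsSource.isAcyclic {T : Tournament V} {x : V} (h : T.IsSource x)
    (hT : (T.erase x).IsAcyclic) : T.IsAcyclic := by
  intro a b c hab hbc
  by_cases hbx : b = x
  · subst hbx
    exact absurd (h a fun hab' => T.irrefl a (hab' ▸ hab)) (T.asymm a b hab)
  by_cases hcx : c = x
  · subst hcx
    exact absurd (h b hbx) (T.asymm b c hbc)
  by_cases hax : a = x
  · subst hax
    exact h c hcx
  · exact hT ⟨a, hax⟩ ⟨b, hbx⟩ ⟨c, hcx⟩ hab hbc

theorem isAcyclic_invSeq_cons_of_erase (T : Tournament V) (x : V)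
    (Xs : List (Set {y : V // y ≠ x}))
    (h : (((T.inv (insert x {v | T.rel v x})).erase x).invSeq Xs).IsAcyclic) :
    (T.invSeq (insert x {v | T.rel v x} :: Xs.map (Subtype.val '' ·))).IsAcyclic := by
  rw [invSeq_cons]
  refine ((T.isSource_inv_insert_setOf_rel x).invSeq ?_).isAcyclic ?_
  · simp only [List.mem_map]
    rintro _ ⟨S, -, rfl⟩ ⟨y, -, hy⟩
    exact y.2 hy
  · convert h using 1
    exact restrict_invSeq_map_image _ {y | y ≠ x} Xs

theorem exists_invSeq_isAcyclic_length_le (n : ℕ) (hn : 4 ≤ n) :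
    ∀ {V : Type*} [Fintype V], Fintype.card V = n →
      ∀ T : Tournament V, ∃ Xs : List (Set V), Xs.length ≤ n - 3 ∧ (T.invSeq Xs).IsAcyclic := by
  induction n, hn using Nat.le_induction with
  | base =>
    intro V _ hV T
    obtain ⟨X, hX⟩ := exists_inv_isAcyclic_of_card_eq_four hV T
    exact ⟨[X], le_rfl, hX⟩
  | succ n _ ih =>
    intro V _ hV T
    classical
    obtain ⟨x⟩ : Nonempty V := Fintype.card_pos_iff.mp (by omega)
    have hV' : Fintype.card {y : V // y ≠ x} = n := by
      rw [Fintype.card_subtype_compl, Fintype.card_subtype_eq, hV, Nat.add_sub_cancel]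
    obtain ⟨Xs, hlen, hXs⟩ := ih hV' ((T.inv (insert x {v | T.rel v x})).erase x)
    refine ⟨_, ?_, T.isAcyclic_invSeq_cons_of_erase x Xs hXs⟩
    rw [List.length_cons, List.length_map]
    omega

end Tournament

/-- every tournament on `n ≥ 4` vertices has inversion index at most
`n − 3`. -/
theorem index_le_card_sub_three {V : Type*} [Fintype V] (n : ℕ) (hn : 4 ≤ n)
    (hcard : Fintype.card V = n) (T : Tournament V) :
    T.index ≤ n - 3 := by
  obtain ⟨Xs, hlen, hXs⟩ := Tournament.exists_invSeq_isAcyclic_length_le n hn hcard T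
  exact (Tournament.index_le_length hXs).trans hlen
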